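/- Let E be a set of pairs (i,j) with 1 ≤ i < j ≤ N, and let Γ_E be the simple graph on vertex set {1,…,N} with edge set E. Then the Lie subalgebra Lie({A_{ij} : (i,j) ∈ E}) equals the linear span of the set consisting of all A_{ij} with i ≠ j such that i and j lie in the same connected component of Γ_E, together with all B_{ijk} with i, j, k pairwise distinct such that i, j, k all lie in the same connected component of Γ_E. -/

import Mathlib

/-- `A i j = E i j + E j i - E i i - E j j`. -/
noncomputable def Amat (N : ℕ) (i j : Fin N) : Matrix (Fin N) (Fin N) ℝ :=
  Matrix.single i j 1 + Matrix.single j i 1 -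
    Matrix.single i i 1 - Matrix.single j j 1

/-- `B i j k = (E i k - E k i) - (E i j - E j i) - (E j k - E k j)`. -/
noncomputable def Bmat (N : ℕ) (i j k : Fin N) : Matrix (Fin N) (Fin N) ℝ :=
  (Matrix.single i k 1 - Matrix.single k i 1) -
    (Matrix.single i j 1 - Matrix.single j i 1) -
    (Matrix.single j k 1 - Matrix.single k j 1)

attribute [local instance] LieRing.ofAssociativeRing

/-- The smallest Lie subalgebra (linear subspace closed under the commutator)
of the `N × N` real matrices containing a set `S`. -/
noncomputable def lieGen (N : ℕ) (S : Set (Matrix (Fin N) (Fin N) ℝ)) :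
    LieSubalgebra ℝ (Matrix (Fin N) (Fin N) ℝ) :=
  LieSubalgebra.lieSpan ℝ (Matrix (Fin N) (Fin N) ℝ) S

/-- The simple graph on `{1,…,N}` whose edges are the pairs in `E`. -/
def graphOf (N : ℕ) (E : Set (Fin N × Fin N)) : SimpleGraph (Fin N) where
  Adj a b := a ≠ b ∧ ((a, b) ∈ E ∨ (b, a) ∈ E)
  symm := by
    constructor
    intro a b h
    exact ⟨h.1.symm, h.2.symm⟩
  loopless := by
    constructor
    intro a h
    exact h.1 rfl

/-!
With `v i j = e i - e j`, one has `A i j = -v i j (v i j)ᵀ` and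
`B i j k = v j k (v i j)ᵀ - v i j (v j k)ᵀ`. Commutators of the matrices `u uᵀ`,
`u wᵀ + w uᵀ` and `u wᵀ - w uᵀ` are again such matrices with dot products as coefficients,
and `v i j ⬝ v k l = 0` when the two pairs lie in different components; so the span is closed
under the bracket. Conversely `A i k = A i j - ½ [[A i j, A j k], A j k]` propagates the
generators along paths, and `B i j k = [A i j, A j k]`.
-/

open Matrix

lemma LieSubalgebra.coe_lieSpan_eq_span_of_forall_lie_mem_span {R L : Type*} [CommRing R]
    [LieRing L] [LieAlgebra R L] {s : Set L}
    (hs : ∀ x ∈ s, ∀ y ∈ s, ⁅x, y⁆ ∈ Submodule.span R s) :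
    (lieSpan R L s : Submodule R L) = Submodule.span R s := by
  have lie_mem {x y : L} (hx : x ∈ Submodule.span R s) (hy : y ∈ Submodule.span R s) :
      ⁅x, y⁆ ∈ Submodule.span R s := by
    induction hx, hy using Submodule.span_induction₂ with
    | mem_mem x y hx hy => exact hs x hx y hy
    | zero_left y _ => simp
    | zero_right x _ => simp
    | add_left x y z _ _ _ hx hy => simpa using add_mem hx hy
    | add_right x y z _ _ _ hx hy => simpa using add_mem hx hy
    | smul_left r x y _ _ h => simpa using Submodule.smul_mem _ r h
    | smul_right r x y _ _ h => simpa using Submodule.smul_mem _ r h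
  refine le_antisymm ?_ submodule_span_le_lieSpan
  change _ ≤ ({ Submodule.span R s with lie_mem' := lie_mem } : LieSubalgebra R L)
  exact lieSpan_le.mpr Submodule.subset_span

section Outer

variable {R n : Type*} [CommRing R]

def symOuter (u w : n → R) : Matrix n n R := vecMulVec u w + vecMulVec w u

def skewOuter (u w : n → R) : Matrix n n R := vecMulVec u w - vecMulVec w u

lemma symOuter_comm (u w : n → R) : symOuter u w = symOuter w u := add_comm _ _

lemma symOuter_sub_right (u v w : n → R) :
    symOuter u (v - w) = symOuter u v - symOuter u w := by
  simp only [symOuter, vecMulVec_sub, sub_vecMulVec]; abel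

lemma skewOuter_sub_right (u v w : n → R) :
    skewOuter u (v - w) = skewOuter u v - skewOuter u w := by
  simp only [skewOuter, vecMulVec_sub, sub_vecMulVec]; abel

lemma skewOuter_comm (u w : n → R) : skewOuter w u = -skewOuter u w := (neg_sub _ _).symm

lemma vecMulVec_add_self (u w : n → R) :
    vecMulVec (u + w) (u + w) = vecMulVec u u + vecMulVec w w + symOuter u w := by
  simp only [symOuter, vecMulVec_add, add_vecMulVec]; abel

variable [Fintype n]

lemma lie_vecMulVec_self_vecMulVec_self (u v : n → R) :
    ⁅vecMulVec u u, vecMulVec v v⁆ = (u ⬝ᵥ v) • skewOuter u v := by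
  rw [Ring.lie_def, vecMulVec_mul_vecMulVec, vecMulVec_mul_vecMulVec, vecMulVec_smul,
    vecMulVec_smul, dotProduct_comm v u, skewOuter, smul_sub]

lemma lie_vecMulVec_self_skewOuter (u v w : n → R) :
    ⁅vecMulVec u u, skewOuter v w⁆ = (u ⬝ᵥ v) • symOuter u w - (u ⬝ᵥ w) • symOuter u v := by
  simp only [Ring.lie_def, skewOuter, symOuter, mul_sub, sub_mul, vecMulVec_mul_vecMulVec,
    vecMulVec_smul, dotProduct_comm v u, dotProduct_comm w u]
  module

lemma lie_skewOuter_skewOuter (u v x y : n → R) :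
    ⁅skewOuter u v, skewOuter x y⁆ = (v ⬝ᵥ x) • skewOuter u y - (v ⬝ᵥ y) • skewOuter u x -
      (u ⬝ᵥ x) • skewOuter v y + (u ⬝ᵥ y) • skewOuter v x := by
  simp only [Ring.lie_def, skewOuter, mul_sub, sub_mul, vecMulVec_mul_vecMulVec,
    vecMulVec_smul, dotProduct_comm x v, dotProduct_comm y v, dotProduct_comm x u,
    dotProduct_comm y u]
  module

end Outer

section DiffVec

variable {R n : Type*} [CommRing R] [DecidableEq n]

def diffVec (i j : n) : n → R := Pi.single i 1 - Pi.single j 1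

lemma diffVec_add_diffVec (i j k : n) :
    (diffVec i j + diffVec j k : n → R) = diffVec i k := by
  simp only [diffVec]; abel

lemma diffVec_sub_diffVec (i j k : n) :
    (diffVec i k - diffVec i j : n → R) = diffVec j k := by
  simp only [diffVec]; abel

variable [Fintype n]

lemma diffVec_dotProduct_diffVec (i j k l : n) :
    (diffVec i j ⬝ᵥ diffVec k l : R) =
      (if i = k then 1 else 0) - (if i = l then 1 else 0) -
        (if j = k then 1 else 0) + (if j = l then 1 else 0) := by
  simp only [diffVec, sub_dotProduct, dotProduct_sub, single_dotProduct, one_mul,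
    Pi.single_apply, eq_comm]
  ring

lemma diffVec_dotProduct_diffVec_eq_zero {i j k l : n} (hik : i ≠ k) (hil : i ≠ l)
    (hjk : j ≠ k) (hjl : j ≠ l) : (diffVec i j ⬝ᵥ diffVec k l : R) = 0 := by
  simp [diffVec_dotProduct_diffVec, hik, hil, hjk, hjl]

lemma diffVec_dotProduct_diffVec_smul_mem {M : Type*} [AddCommGroup M] [Module R M]
    (G : SimpleGraph n) {p : Submodule R M} {i j k l : n} (hij : G.Reachable i j)
    (hkl : G.Reachable k l) {x : M}
    (hx : G.Reachable i k → x ∈ p) : (diffVec i j ⬝ᵥ diffVec k l : R) • x ∈ p := by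
  by_cases hik : G.Reachable i k
  · exact p.smul_mem _ (hx hik)
  · have hne {a b : n} (ha : G.Reachable i a) (hb : G.Reachable k b) : a ≠ b := by
      rintro rfl; exact hik (ha.trans hb.symm)
    rw [diffVec_dotProduct_diffVec_eq_zero (hne .rfl .rfl) (hne .rfl hkl) (hne hij .rfl)
      (hne hij hkl), zero_smul]
    exact p.zero_mem

end DiffVec

section AmatBmat

variable {N : ℕ}

lemma Amat_eq_neg_vecMulVec (i j : Fin N) :
    Amat N i j = -vecMulVec (diffVec i j) (diffVec i j) := by
  simp only [Amat, single_eq_single_vecMulVec_single, diffVec, vecMulVec_sub, sub_vecMulVec]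
  abel

lemma Bmat_eq_skewOuter (i j k : Fin N) :
    Bmat N i j k = skewOuter (diffVec j k) (diffVec i j) := by
  simp only [Bmat, skewOuter, single_eq_single_vecMulVec_single, diffVec, vecMulVec_sub,
    sub_vecMulVec]
  abel

@[simp]
lemma Amat_self (i : Fin N) : Amat N i i = 0 := by simp [Amat]

lemma Amat_comm (i j : Fin N) : Amat N i j = Amat N j i := by
  simp only [Amat]; abel

@[simp]
lemma Bmat_self_left (i k : Fin N) : Bmat N i i k = 0 := by simp [Bmat]

@[simp]
lemma Bmat_self_right (i j : Fin N) : Bmat N i j j = 0 := by simp [Bmat]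

@[simp]
lemma Bmat_self_left_right (i j : Fin N) : Bmat N i j i = 0 := by simp [Bmat]

lemma lie_Amat_Amat {i j k : Fin N} (hij : i ≠ j) (hik : i ≠ k) (hjk : j ≠ k) :
    ⁅Amat N i j, Amat N j k⁆ = Bmat N i j k := by
  rw [Amat_eq_neg_vecMulVec, Amat_eq_neg_vecMulVec, neg_lie, lie_neg, neg_neg,
    lie_vecMulVec_self_vecMulVec_self, Bmat_eq_skewOuter, diffVec_dotProduct_diffVec]
  simp [hij, hik, hjk, skewOuter_comm (diffVec i j)]

lemma lie_Bmat_Amat {i j k : Fin N} (hij : i ≠ j) (hik : i ≠ k) (hjk : j ≠ k) :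
    ⁅Bmat N i j k, Amat N j k⁆ = (2 : ℝ) • Amat N i j - (2 : ℝ) • Amat N i k := by
  have hjj : (diffVec j k ⬝ᵥ diffVec j k : ℝ) = 2 := by
    simp [diffVec_dotProduct_diffVec, hjk, hjk.symm]; norm_num
  have hji : (diffVec j k ⬝ᵥ diffVec i j : ℝ) = -1 := by
    simp [diffVec_dotProduct_diffVec, hij.symm, hjk.symm, hik.symm]
  rw [Bmat_eq_skewOuter, Amat_eq_neg_vecMulVec, lie_neg, ← lie_skew, neg_neg,
    lie_vecMulVec_self_skewOuter, hjj, hji, Amat_eq_neg_vecMulVec, Amat_eq_neg_vecMulVec,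
    ← diffVec_add_diffVec i j k, vecMulVec_add_self, symOuter_comm]
  simp only [symOuter]
  module

lemma Amat_eq_sub_lie_lie {i j k : Fin N} (hij : i ≠ j) (hik : i ≠ k) (hjk : j ≠ k) :
    Amat N i k = Amat N i j - (2⁻¹ : ℝ) • ⁅⁅Amat N i j, Amat N j k⁆, Amat N j k⁆ := by
  rw [lie_Amat_Amat hij hik hjk, lie_Bmat_Amat hij hik hjk, smul_sub, smul_smul, smul_smul]
  norm_num

end AmatBmat

section Components

variable {N : ℕ} (G : SimpleGraph (Fin N))

def componentGens : Set (Matrix (Fin N) (Fin N) ℝ) :=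
  {M | ∃ i j : Fin N, i ≠ j ∧ G.Reachable i j ∧ M = Amat N i j} ∪
    {M | ∃ i j k : Fin N, i ≠ j ∧ i ≠ k ∧ j ≠ k ∧
      G.Reachable i j ∧ G.Reachable j k ∧ M = Bmat N i j k}

local notation "𝒯" => Submodule.span ℝ (componentGens G)

variable {G}

open SimpleGraph

lemma Amat_mem_span_componentGens {i j : Fin N} (h : G.Reachable i j) : Amat N i j ∈ 𝒯 := by
  by_cases hij : i = j
  · simp [hij]
  · exact Submodule.subset_span (.inl ⟨i, j, hij, h, rfl⟩)

lemma Bmat_mem_span_componentGens {i j k : Fin N} (hij : G.Reachable i j)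
    (hjk : G.Reachable j k) : Bmat N i j k ∈ 𝒯 := by
  by_cases h₁ : i = j
  · simp [h₁]
  by_cases h₂ : j = k
  · simp [h₂]
  by_cases h₃ : i = k
  · simp [h₃]
  exact Submodule.subset_span (.inr ⟨i, j, k, h₁, h₃, h₂, hij, hjk, rfl⟩)

lemma symOuter_diffVec_mem_span_componentGens {a b c d : Fin N} (hab : G.Reachable a b)
    (hbc : G.Reachable b c) (hbd : G.Reachable b d) :
    symOuter (diffVec a b) (diffVec c d) ∈ 𝒯 := by
  have adjacent {x : Fin N} (hx : G.Reachable b x) :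
      symOuter (diffVec a b) (diffVec b x) ∈ 𝒯 := by
    have h := vecMulVec_add_self (diffVec a b : Fin N → ℝ) (diffVec b x)
    rw [diffVec_add_diffVec] at h
    have : symOuter (diffVec a b) (diffVec b x) = Amat N a b + Amat N b x - Amat N a x := by
      simp only [Amat_eq_neg_vecMulVec, h]; abel
    rw [this]
    exact sub_mem (add_mem (Amat_mem_span_componentGens hab) (Amat_mem_span_componentGens hx))
      (Amat_mem_span_componentGens (hab.trans hx))
  rw [← diffVec_sub_diffVec b c d, symOuter_sub_right]
  exact sub_mem (adjacent hbd) (adjacent hbc)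

lemma skewOuter_diffVec_mem_span_componentGens {a b c d : Fin N} (hab : G.Reachable a b)
    (hbc : G.Reachable b c) (hbd : G.Reachable b d) :
    skewOuter (diffVec a b) (diffVec c d) ∈ 𝒯 := by
  have adjacent {x : Fin N} (hx : G.Reachable b x) :
      skewOuter (diffVec a b) (diffVec b x) ∈ 𝒯 := by
    rw [skewOuter_comm, ← Bmat_eq_skewOuter]
    exact neg_mem (Bmat_mem_span_componentGens hab hx)
  rw [← diffVec_sub_diffVec b c d, skewOuter_sub_right]
  exact sub_mem (adjacent hbd) (adjacent hbc)

lemma lie_Amat_Amat_mem_span_componentGens {i j k l : Fin N} (hij : G.Reachable i j)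
    (hkl : G.Reachable k l) : ⁅Amat N i j, Amat N k l⁆ ∈ 𝒯 := by
  rw [Amat_eq_neg_vecMulVec, Amat_eq_neg_vecMulVec, neg_lie, lie_neg, neg_neg,
    lie_vecMulVec_self_vecMulVec_self]
  exact diffVec_dotProduct_diffVec_smul_mem G hij hkl fun hik ↦
    skewOuter_diffVec_mem_span_componentGens hij
      (by grind [Reachable.trans, Reachable.symm]) (by grind [Reachable.trans, Reachable.symm])

lemma lie_Amat_Bmat_mem_span_componentGens {i j p q r : Fin N} (hij : G.Reachable i j)
    (hpq : G.Reachable p q) (hqr : G.Reachable q r) : ⁅Amat N i j, Bmat N p q r⁆ ∈ 𝒯 := by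
  rw [Amat_eq_neg_vecMulVec, Bmat_eq_skewOuter, neg_lie, lie_vecMulVec_self_skewOuter]
  refine neg_mem (sub_mem ?_ ?_)
  · exact diffVec_dotProduct_diffVec_smul_mem G hij hqr fun hiq ↦
      symOuter_diffVec_mem_span_componentGens hij
        (by grind [Reachable.trans, Reachable.symm]) (by grind [Reachable.trans, Reachable.symm])
  · exact diffVec_dotProduct_diffVec_smul_mem G hij hpq fun hip ↦
      symOuter_diffVec_mem_span_componentGens hij
        (by grind [Reachable.trans, Reachable.symm]) (by grind [Reachable.trans, Reachable.symm])

lemma lie_Bmat_Bmat_mem_span_componentGens {p q r s t w : Fin N} (hpq : G.Reachable p q)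
    (hqr : G.Reachable q r) (hst : G.Reachable s t) (htw : G.Reachable t w) :
    ⁅Bmat N p q r, Bmat N s t w⁆ ∈ 𝒯 := by
  rw [Bmat_eq_skewOuter, Bmat_eq_skewOuter, lie_skewOuter_skewOuter]
  refine add_mem (sub_mem (sub_mem ?_ ?_) ?_) ?_ <;>
  · refine diffVec_dotProduct_diffVec_smul_mem G (by assumption) (by assumption) fun h ↦
      skewOuter_diffVec_mem_span_componentGens (by assumption)
        (by grind [Reachable.trans, Reachable.symm]) (by grind [Reachable.trans, Reachable.symm])

lemma lie_mem_span_componentGens :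
    ∀ x ∈ componentGens G, ∀ y ∈ componentGens G, ⁅x, y⁆ ∈ 𝒯 := by
  rintro _ (⟨i, j, -, hij, rfl⟩ | ⟨i, j, k, -, -, -, hij, hjk, rfl⟩)
    _ (⟨p, q, -, hpq, rfl⟩ | ⟨p, q, r, -, -, -, hpq, hqr, rfl⟩)
  · exact lie_Amat_Amat_mem_span_componentGens hij hpq
  · exact lie_Amat_Bmat_mem_span_componentGens hij hpq hqr
  · rw [← lie_skew]
    exact neg_mem (lie_Amat_Bmat_mem_span_componentGens hpq hij hjk)
  · exact lie_Bmat_Bmat_mem_span_componentGens hij hjk hpq hqr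

end Components

section Generation

variable {N : ℕ} {G : SimpleGraph (Fin N)} {L : LieSubalgebra ℝ (Matrix (Fin N) (Fin N) ℝ)}

lemma Amat_mem_of_reachable (hL : ∀ i j, G.Adj i j → Amat N i j ∈ L) {i j : Fin N}
    (h : G.Reachable i j) : Amat N i j ∈ L := by
  obtain ⟨w⟩ := h
  induction w with
  | nil => simp
  | @cons i a j hadj _ haj =>
    by_cases hij : i = j
    · simp [hij]
    by_cases ha : a = j
    · exact ha ▸ hL i a hadj
    rw [Amat_eq_sub_lie_lie hadj.ne hij ha]
    have hia := hL i a hadj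
    exact L.sub_mem hia (L.smul_mem _ (L.lie_mem (L.lie_mem hia haj) haj))

lemma componentGens_subset (hL : ∀ i j, G.Adj i j → Amat N i j ∈ L) :
    componentGens G ⊆ L := by
  rintro _ (⟨i, j, -, hij, rfl⟩ | ⟨i, j, k, hne_ij, hne_ik, hne_jk, hij, hjk, rfl⟩)
  · exact Amat_mem_of_reachable hL hij
  · rw [← lie_Amat_Amat hne_ij hne_ik hne_jk]
    exact L.lie_mem (Amat_mem_of_reachable hL hij) (Amat_mem_of_reachable hL hjk)

end Generation

lemma graphOf_reachable_of_mem {N : ℕ} {E : Set (Fin N × Fin N)} {p : Fin N × Fin N}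
    (hp : p ∈ E) : (graphOf N E).Reachable p.1 p.2 := by
  by_cases h : p.1 = p.2
  · exact h ▸ .rfl
  · exact SimpleGraph.Adj.reachable ⟨h, .inl hp⟩

theorem lieGen_Amat_eq_span_components_general (N : ℕ) (E : Set (Fin N × Fin N)) :
    (lieGen N {M | ∃ p ∈ E, M = Amat N p.1 p.2} : Set (Matrix (Fin N) (Fin N) ℝ)) =
      (Submodule.span ℝ
        ({M | ∃ i j : Fin N, i ≠ j ∧ (graphOf N E).Reachable i j ∧ M = Amat N i j} ∪
         {M | ∃ i j k : Fin N, i ≠ j ∧ i ≠ k ∧ j ≠ k ∧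
            (graphOf N E).Reachable i j ∧ (graphOf N E).Reachable j k ∧
            M = Bmat N i j k}) :
        Set (Matrix (Fin N) (Fin N) ℝ)) := by
  set G := graphOf N E
  change _ = (Submodule.span ℝ (componentGens G) : Set (Matrix (Fin N) (Fin N) ℝ))
  have hspan := LieSubalgebra.coe_lieSpan_eq_span_of_forall_lie_mem_span
    (lie_mem_span_componentGens (G := G))
  have hgen : lieGen N {M | ∃ p ∈ E, M = Amat N p.1 p.2} =
      LieSubalgebra.lieSpan ℝ _ (componentGens G) := by
    refine le_antisymm (LieSubalgebra.lieSpan_le.mpr ?_) (LieSubalgebra.lieSpan_le.mpr ?_)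
    · rintro _ ⟨p, hp, rfl⟩
      rw [SetLike.mem_coe, ← LieSubalgebra.mem_toSubmodule, hspan]
      exact Amat_mem_span_componentGens (graphOf_reachable_of_mem hp)
    · refine componentGens_subset fun i j hij ↦ ?_
      rcases hij.2 with h | h
      · exact LieSubalgebra.subset_lieSpan ⟨(i, j), h, rfl⟩
      · exact Amat_comm j i ▸ LieSubalgebra.subset_lieSpan ⟨(j, i), h, rfl⟩
  rw [hgen, ← hspan]
  rfl

theorem lieGen_Amat_eq_span_components (N : ℕ) (E : Set (Fin N × Fin N))
    (hE : ∀ p ∈ E, p.1 < p.2) :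
    (lieGen N {M | ∃ p ∈ E, M = Amat N p.1 p.2} : Set (Matrix (Fin N) (Fin N) ℝ)) =
      (Submodule.span ℝ
        ({M | ∃ i j : Fin N, i ≠ j ∧ (graphOf N E).Reachable i j ∧ M = Amat N i j} ∪
         {M | ∃ i j k : Fin N, i ≠ j ∧ i ≠ k ∧ j ≠ k ∧
            (graphOf N E).Reachable i j ∧ (graphOf N E).Reachable j k ∧
            M = Bmat N i j k}) :
        Set (Matrix (Fin N) (Fin N) ℝ)) :=
  lieGen_Amat_eq_span_components_general N E
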